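/- With G, z, λ as above, and Δ̄_z : D(G) → D(G)⊗D(G) determined by g ↦ g⊗g and δ_g ↦ Σ_{σ,τ∈Z/2} δ^σ_{gz^τ} ⊗ δ^τ_{gz^σ}, the diagram commutes: (λ ⊗ λ) ∘ Δ̄ = Δ̄_z ∘ λ. -/

import Mathlib

/-!
STATEMENT 7: With `G`, `z`, `λ` as before, and
`Δ̄_z : D(G) → D(G) ⊗ D(G)` determined by `g ↦ g ⊗ g` and
`δ_g ↦ Σ_{σ,τ∈Z/2} δ^σ_{gz^τ} ⊗ δ^τ_{gz^σ}`, the diagram commutes: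
`(λ ⊗ λ) ∘ Δ̄ = Δ̄_z ∘ λ`.

`D(G)` is modeled on the basis `{g ⊗ δ_h}` indexed by `G × G`, and
`D(G) ⊗ D(G)` on the basis indexed by `(G × G) × (G × G)`.
Here `δ_u^σ = e^σ·δ_u` with `e^σ = (1 + (−1)^σ z)/2`; more generally, for a
basis element we use `g·δ_u^σ = ½((g,u) + (−1)^σ (gz,u))`.
-/

open Finsupp

/-- Tensor product of elements of `D(G)`, as an element of `D(G) ⊗ D(G)`. -/
noncomputable def fTensor (k G : Type) [Field k] [Group G] [DecidableEq G]
    (a b : (G × G) →₀ k) : ((G × G) × (G × G)) →₀ k :=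
  a.sum fun p c => b.sum fun q d => Finsupp.single (p, q) (c * d)

/-- The element `g·δ_u^σ = g·e^σ·δ_u = ½((g,u) + (−1)^σ (gz,u))` of `D(G)`. -/
noncomputable def parDelta (k G : Type) [Field k] [Group G] [DecidableEq G]
    (z : G) (g u : G) (σ : Bool) : (G × G) →₀ k :=
  (2 : k)⁻¹ • (Finsupp.single (g, u) (1 : k)
    + (if σ then (-1 : k) else (1 : k)) • Finsupp.single (g * z, u) (1 : k))

/-- `z^σ` for `σ ∈ Z/2`. -/
def zpow2 (G : Type) [Group G] (z : G) (σ : Bool) : G := if σ then z else 1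

/-- The value of the twisted coproduct `Δ̄_z` on the basis element `g·δ_h`:
`Δ̄_z(g·δ_h) = Σ_{σ,τ} (g·δ^σ_{hz^τ}) ⊗ (g·δ^τ_{hz^σ})`. -/
noncomputable def deltaZbasis (k G : Type) [Field k] [Group G] [DecidableEq G]
    (z : G) (p : G × G) : ((G × G) × (G × G)) →₀ k :=
  ∑ σ : Bool, ∑ τ : Bool,
    fTensor k G (parDelta k G z p.1 (p.2 * zpow2 G z τ) σ)
      (parDelta k G z p.1 (p.2 * zpow2 G z σ) τ)

/-- The twisted coproduct `Δ̄_z`, `g ↦ g ⊗ g`,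
`δ_g ↦ Σ_{σ,τ} δ^σ_{gz^τ} ⊗ δ^τ_{gz^σ}` (linear extension). -/
noncomputable def deltaZ (k G : Type) [Field k] [Group G] [DecidableEq G]
    (z : G) (a : (G × G) →₀ k) : ((G × G) × (G × G)) →₀ k :=
  a.sum fun p c => c • deltaZbasis k G z p

/-- The untwisted coproduct `Δ̄` (`g ↦ g ⊗ g`, `δ_g ↦ δ_g ⊗ δ_g`). -/
noncomputable def deltaBar (k G : Type) [Field k] [Group G] [DecidableEq G]
    (a : (G × G) →₀ k) : ((G × G) × (G × G)) →₀ k :=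
  a.sum fun p c => Finsupp.single (p, p) c

/-- The automorphism `λ` (`g ↦ g`, `δ_g ↦ δ_g⁰ + δ_{gz}¹`). -/
noncomputable def lamMap (k G : Type) [Field k] [Group G] [DecidableEq G]
    (z : G) (a : (G × G) →₀ k) : (G × G) →₀ k :=
  a.sum fun p c => ((2 : k)⁻¹ * c) •
    (Finsupp.single (p.1, p.2) (1 : k) + Finsupp.single (p.1 * z, p.2) (1 : k)
      + Finsupp.single (p.1, p.2 * z) (1 : k) - Finsupp.single (p.1 * z, p.2 * z) (1 : k))

/-- `λ ⊗ λ : D(G) ⊗ D(G) → D(G) ⊗ D(G)`. -/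
noncomputable def lam2 (k G : Type) [Field k] [Group G] [DecidableEq G]
    (z : G) (t : ((G × G) × (G × G)) →₀ k) : ((G × G) × (G × G)) →₀ k :=
  t.sum fun pq c => c • fTensor k G (lamMap k G z (Finsupp.single pq.1 (1 : k)))
    (lamMap k G z (Finsupp.single pq.2 (1 : k)))

/-!
On a basis element, `λ(g δ_h) = g δ_h⁰ + g δ_{hz}¹`. Since `z² = 1`, `gz δ_u^σ = (−1)^σ g δ_u^σ`, so
`Δ̄_z(g δ_u^ρ) = Σ_{σ+τ=ρ} g δ^σ_{uz^τ} ⊗ g δ^τ_{uz^σ}`. For `(u, ρ) = (h, 0)` and `(hz, 1)` these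
are the four terms of `λ(g δ_h) ⊗ λ(g δ_h) = (λ ⊗ λ)(Δ̄(g δ_h))`, and all maps involved are linear.
-/

open TensorProduct

section
variable {k G : Type} [Field k] [Group G] [DecidableEq G]

theorem fTensor_eq_finsuppTensorFinsupp' (a b : (G × G) →₀ k) :
    fTensor k G a b = finsuppTensorFinsupp' k (G × G) (G × G) (a ⊗ₜ b) := by
  conv_rhs => rw [← a.sum_single, ← b.sum_single]
  simp only [Finsupp.sum, sum_tmul, tmul_sum, map_sum, finsuppTensorFinsupp'_single_tmul_single,
    fTensor]
  exact Finset.sum_comm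

theorem deltaBar_eq_mapDomain (a : (G × G) →₀ k) :
    deltaBar k G a = a.mapDomain fun p => (p, p) := rfl

theorem lam2_eq_linearCombination (z : G) (t : ((G × G) × (G × G)) →₀ k) :
    lam2 k G z t = linearCombination k (fun pq => fTensor k G
      (lamMap k G z (single pq.1 1)) (lamMap k G z (single pq.2 1))) t := rfl

theorem lam2_deltaBar (z : G) (a : (G × G) →₀ k) :
    lam2 k G z (deltaBar k G a) = linearCombination k
      (fun p => fTensor k G (lamMap k G z (single p 1)) (lamMap k G z (single p 1))) a := by
  rw [deltaBar_eq_mapDomain, lam2_eq_linearCombination, linearCombination_mapDomain]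
  rfl

theorem deltaZ_eq_linearCombination (z : G) :
    deltaZ k G z = linearCombination k (deltaZbasis k G z) := rfl

theorem lamMap_single (z : G) (p : G × G) (c : k) :
    lamMap k G z (single p c) = ((2 : k)⁻¹ * c) •
      (single (p.1, p.2) 1 + single (p.1 * z, p.2) 1 + single (p.1, p.2 * z) 1
        - single (p.1 * z, p.2 * z) 1) := by
  simp [lamMap]

theorem lamMap_eq_linearCombination (z : G) (a : (G × G) →₀ k) :
    lamMap k G z a = linearCombination k (fun p => lamMap k G z (single p 1)) a := by
  rw [linearCombination_apply]
  refine Finsupp.sum_congr fun p _ => ?_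
  rw [lamMap_single, smul_smul, mul_one, mul_comm]

theorem lamMap_single_one (z g h : G) :
    lamMap k G z (single (g, h) 1) =
      parDelta k G z g h false + parDelta k G z g (h * z) true := by
  rw [lamMap_single]
  simp only [parDelta, mul_one, Bool.false_eq_true, if_true, if_false]
  module

variable {z : G}

theorem parDelta_mul_right (hz2 : z * z = 1) (g u : G) (σ : Bool) :
    parDelta k G z (g * z) u σ = (if σ then (-1 : k) else 1) • parDelta k G z g u σ := by
  cases σ <;>
    simp only [parDelta, mul_assoc, hz2, mul_one, Bool.false_eq_true, if_true, if_false] <;> module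

theorem deltaZbasis_mul_right (hz2 : z * z = 1) (g h : G) :
    deltaZbasis k G z (g * z, h) = ∑ σ : Bool, ∑ τ : Bool,
      ((if σ then (-1 : k) else 1) * (if τ then (-1 : k) else 1)) •
        fTensor k G (parDelta k G z g (h * zpow2 G z τ) σ)
          (parDelta k G z g (h * zpow2 G z σ) τ) := by
  simp only [deltaZbasis, parDelta_mul_right hz2, fTensor_eq_finsuppTensorFinsupp', ← smul_tmul',
    tmul_smul, map_smul, smul_smul, mul_comm]

theorem deltaZ_parDelta [NeZero (2 : k)] (hz2 : z * z = 1) (g u : G) (ρ : Bool) :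
    deltaZ k G z (parDelta k G z g u ρ) = ∑ σ : Bool,
      fTensor k G (parDelta k G z g (u * zpow2 G z (xor σ ρ)) σ)
        (parDelta k G z g (u * zpow2 G z σ) (xor σ ρ)) := by
  have expand : deltaZ k G z (parDelta k G z g u ρ) = (2 : k)⁻¹ • (deltaZbasis k G z (g, u) +
      (if ρ then (-1 : k) else 1) • deltaZbasis k G z (g * z, u)) := by
    cases ρ <;> simp [parDelta, deltaZ_eq_linearCombination]
  rw [expand, deltaZbasis_mul_right hz2]
  cases ρ <;>
    simp only [deltaZbasis, Fintype.sum_bool, Bool.false_eq_true, if_true, if_false,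
      Bool.xor_false, Bool.xor_true, Bool.not_true, Bool.not_false] <;>
    match_scalars <;> field_simp <;> ring

theorem fTensor_self_lamMap_single [NeZero (2 : k)] (hz2 : z * z = 1) (g h : G) :
    fTensor k G (lamMap k G z (single (g, h) 1)) (lamMap k G z (single (g, h) 1)) =
      deltaZ k G z (lamMap k G z (single (g, h) 1)) := by
  rw [lamMap_single_one, deltaZ_eq_linearCombination, map_add, ← deltaZ_eq_linearCombination,
    deltaZ_parDelta hz2, deltaZ_parDelta hz2]
  simp only [Fintype.sum_bool, zpow2, Bool.xor_false, Bool.xor_true, Bool.not_true,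
    Bool.not_false, Bool.false_eq_true, if_true, if_false, mul_one, mul_assoc, hz2,
    fTensor_eq_finsuppTensorFinsupp', add_tmul, tmul_add, map_add]
  abel

end

theorem lam_intertwines_coproducts_general (k G : Type) [Field k] [CharZero k] [Group G]
    [DecidableEq G] (z : G)
    (hz2 : z * z = 1) :
    ∀ a : (G × G) →₀ k, lam2 k G z (deltaBar k G a) = deltaZ k G z (lamMap k G z a) := by
  intro a
  rw [lam2_deltaBar, lamMap_eq_linearCombination, deltaZ_eq_linearCombination,
    apply_linearCombination]
  congr 2
  funext ⟨g, h⟩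
  exact fTensor_self_lamMap_single hz2 g h

/-- `(λ ⊗ λ) ∘ Δ̄ = Δ̄_z ∘ λ`. -/
theorem lam_intertwines_coproducts (k G : Type) [Field k] [CharZero k] [Group G]
    [Fintype G] [DecidableEq G] (z : G) (hzc : ∀ a : G, z * a = a * z)
    (hz2 : z * z = 1) :
    ∀ a : (G × G) →₀ k, lam2 k G z (deltaBar k G a) = deltaZ k G z (lamMap k G z a) :=
  lam_intertwines_coproducts_general k G z hz2
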